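/- arXiv:0901.2593 — 3 statements merged into one kernel-verified Lean document; each statement's English description precedes it below -/
import Mathlib

section
/- Let Q and P be probability measures on a measurable space (Ω, ℱ) with P absolutely continuous with respect to Q, and let S = dP/dQ be the Radon–Nikodym derivative. Let ℬ ⊆ ℱ be a sub-σ-algebra and let F : Ω → ℝ be bounded and ℱ-measurable. Then the conditional expectation under Q of S given ℬ is P-a.s. strictly positive, and P-a.s. the conditional expectation under P of F given ℬ equals E_Q[F·S | ℬ] / E_Q[S | ℬ] (Bayes' formula for conditional expectations under a change of measure). -/
open MeasureTheory

theorem bayes_aux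
    {Ω : Type*} {ℬ m0 : MeasurableSpace Ω} (hℬ : ℬ ≤ m0)
    (Q P : Measure Ω) [IsProbabilityMeasure Q] [IsProbabilityMeasure P]
    (hPQ : P ≪ Q)
    (S : Ω → ℝ) (hS : S = fun ω => (P.rnDeriv Q ω).toReal)
    (F : Ω → ℝ) (hF : Measurable[m0] F) (hFbdd : ∃ C, ∀ ω, |F ω| ≤ C) :
    (∀ᵐ ω ∂P, 0 < (Q[S | ℬ]) ω) ∧
      (∀ᵐ ω ∂P, (P[F | ℬ]) ω = (Q[fun ω => F ω * S ω | ℬ]) ω / (Q[S | ℬ]) ω) := by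
  have hFm : Measurable[m0] F := hF
  obtain ⟨C₀, hC₀⟩ := hFbdd
  set C : ℝ := max C₀ 0 with hCdef
  have hC : ∀ ω, |F ω| ≤ C := fun ω => (hC₀ ω).trans (le_max_left _ _)
  have hC0 : 0 ≤ C := le_max_right _ _
  set g : Ω → ℝ := Q[S | ℬ] with hgdef
  set h : Ω → ℝ := Q[fun ω => F ω * S ω | ℬ] with hhdef
  -- basic facts about S
  have hSnn : ∀ ω, 0 ≤ S ω := by rw [hS]; exact fun ω => ENNReal.toReal_nonneg
  have hSmeas : Measurable[m0] S := by rw [hS]; exact (Measure.measurable_rnDeriv P Q).ennreal_toReal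
  have hSsm : AEStronglyMeasurable S Q := ⟨S, hSmeas.stronglyMeasurable, Filter.EventuallyEq.rfl⟩
  have hFsmQ : AEStronglyMeasurable F Q := ⟨F, hFm.stronglyMeasurable, Filter.EventuallyEq.rfl⟩
  have hFsmP : AEStronglyMeasurable F P := ⟨F, hFm.stronglyMeasurable, Filter.EventuallyEq.rfl⟩
  have hSint : Integrable S Q := by rw [hS]; exact Measure.integrable_toReal_rnDeriv
  have hFS_int : Integrable (fun ω => F ω * S ω) Q := by
    refine hSint.bdd_mul (c := C) hFsmQ (Filter.Eventually.of_forall fun ω => ?_)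
    rw [Real.norm_eq_abs]; exact hC ω
  -- measurability of the conditional expectations
  have hgm : StronglyMeasurable[ℬ] g := stronglyMeasurable_condExp
  have hhm : StronglyMeasurable[ℬ] h := stronglyMeasurable_condExp
  have hg_nonneg : 0 ≤ᵐ[Q] g := condExp_nonneg (Filter.Eventually.of_forall hSnn)
  -- bound |h| ≤ C * g  a.e.
  have hCS : Q[fun ω => C * S ω | ℬ] =ᵐ[Q] fun ω => C * g ω := by
    have := condExp_smul (m := ℬ) (μ := Q) C S
    exact this
  have hh_le : h ≤ᵐ[Q] fun ω => C * g ω := by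
    have h1 : (fun ω => F ω * S ω) ≤ᵐ[Q] fun ω => C * S ω := by
      refine Filter.Eventually.of_forall fun ω => ?_
      calc F ω * S ω ≤ |F ω| * S ω := mul_le_mul_of_nonneg_right (le_abs_self _) (hSnn ω)
        _ ≤ C * S ω := mul_le_mul_of_nonneg_right (hC ω) (hSnn ω)
    have h2 := condExp_mono (m := ℬ) hFS_int (hSint.const_mul C) h1
    filter_upwards [h2, hCS] with ω h2 h3
    rw [← h3]; exact h2
  have hh_ge : (fun ω => -(C * g ω)) ≤ᵐ[Q] h := by
    have h1 : (fun ω => -(C * S ω)) ≤ᵐ[Q] fun ω => F ω * S ω := by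
      refine Filter.Eventually.of_forall fun ω => ?_
      have h2 : -(C * S ω) ≤ -(|F ω| * S ω) := by
        simp only [neg_le_neg_iff]
        exact mul_le_mul_of_nonneg_right (hC ω) (hSnn ω)
      refine h2.trans ?_
      rw [← neg_mul]
      exact mul_le_mul_of_nonneg_right (neg_abs_le _) (hSnn ω)
    have h2 := condExp_mono (m := ℬ) ((hSint.const_mul C).neg') hFS_int h1
    have h3 : Q[fun ω => -(C * S ω) | ℬ] =ᵐ[Q] fun ω => -(C * g ω) := by
      have h5 : Q[fun ω => -(C * S ω) | ℬ] =ᵐ[Q] -(Q[fun ω => C * S ω | ℬ]) := by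
        have := condExp_neg (m := ℬ) (μ := Q) (fun ω => C * S ω)
        exact this
      filter_upwards [hCS, h5] with ω h4 h5
      simp only [h5, Pi.neg_apply, h4]
    filter_upwards [h2, h3] with ω h2 h3
    rw [← h3]; exact h2
  have hh_abs : ∀ᵐ ω ∂Q, |h ω| ≤ C * g ω := by
    filter_upwards [hh_le, hh_ge] with ω h1 h2
    exact abs_le.2 ⟨by simpa using h2, h1⟩
  -- P-a.e. positivity of g
  set A : Set Ω := {ω | g ω ≤ 0} with hAdef
  have hA : MeasurableSet[ℬ] A := hgm.measurable measurableSet_Iic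
  have hA0 : MeasurableSet[m0] A := hℬ _ hA
  have hgA : ∫ ω in A, g ω ∂Q = 0 := by
    have hz : ∀ᵐ ω ∂Q, ω ∈ A → g ω = 0 := by
      filter_upwards [hg_nonneg] with ω h1 h2
      exact le_antisymm h2 h1
    have hz2 : ∀ᵐ ω ∂Q, ω ∈ A → g ω = (fun _ => (0:ℝ)) ω := by
      filter_upwards [hz] with ω hw hm
      exact hw hm
    rw [setIntegral_congr_ae (μ := Q) hA0 hz2]
    simp
  have hSA : ∀ᵐ ω ∂Q, ω ∈ A → S ω = 0 := by
    have hint : ∫ ω in A, S ω ∂Q = 0 := by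
      rw [← setIntegral_condExp hℬ hSint hA]; exact hgA
    have h1 := (setIntegral_eq_zero_iff_of_nonneg_ae (μ := Q) (s := A)
      (ae_restrict_of_ae (Filter.Eventually.of_forall hSnn))
      hSint.integrableOn).1 hint
    rw [Filter.EventuallyEq, ae_restrict_iff' (μ := Q) hA0] at h1
    filter_upwards [h1] with ω hw hm
    simpa using hw hm
  have hPA : P A = 0 := by
    have hrn : ∀ᵐ ω ∂(Q.restrict A), P.rnDeriv Q ω = 0 := by
      rw [ae_restrict_iff' (μ := Q) hA0]
      filter_upwards [hSA, Measure.rnDeriv_ne_top P Q] with ω h1 h2 hm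
      have h3 : (P.rnDeriv Q ω).toReal = 0 := by
        have := h1 hm; rwa [hS] at this
      rcases ENNReal.toReal_eq_zero_iff _ |>.1 h3 with h | h
      · exact h
      · exact absurd h h2
    have h4 : ∫⁻ ω in A, P.rnDeriv Q ω ∂Q = 0 := by
      rw [lintegral_congr_ae hrn]; simp
    rw [← Measure.withDensity_rnDeriv_eq P Q hPQ, withDensity_apply (μ := Q) _ hA0]
    exact h4
  have hgpos : ∀ᵐ ω ∂P, 0 < g ω := by
    rw [ae_iff]
    simp only [not_lt]
    exact hPA
  refine ⟨hgpos, ?_⟩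
  -- the candidate function
  set φ : Ω → ℝ := fun ω => h ω / g ω with hφdef
  have hφm : StronglyMeasurable[ℬ] φ :=
    (hhm.measurable.div hgm.measurable).stronglyMeasurable
  have hφ_bdd : ∀ᵐ ω ∂Q, |φ ω| ≤ C := by
    filter_upwards [hh_abs, hg_nonneg] with ω h1 h2
    simp only [Pi.zero_apply] at h2
    rcases eq_or_lt_of_le h2 with h3 | h3
    · simp only [hφdef, ← h3, div_zero, abs_zero]; exact hC0
    · rw [hφdef, abs_div, abs_of_pos h3, div_le_iff₀ h3]
      exact h1
  have hFint : Integrable F P := by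
    refine Integrable.mono' (integrable_const C) hFsmP ?_
    exact Filter.Eventually.of_forall fun ω => by rw [Real.norm_eq_abs]; exact hC ω
  have hφ_int : Integrable φ P := by
    refine Integrable.mono' (integrable_const C) ((hφm.mono hℬ).aestronglyMeasurable) ?_
    filter_upwards [hPQ.ae_le hφ_bdd] with ω h1
    rwa [Real.norm_eq_abs]
  -- φ * g = h  a.e.
  have hφg : (fun ω => φ ω * g ω) =ᵐ[Q] h := by
    filter_upwards [hh_abs, hg_nonneg] with ω h1 h2
    simp only [Pi.zero_apply] at h2
    rcases eq_or_lt_of_le h2 with h3 | h3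
    · have h4 : h ω = 0 := by
        have h5 := h1; rw [← h3, mul_zero] at h5
        exact abs_eq_zero.1 (le_antisymm h5 (abs_nonneg _))
      simp [hφdef, ← h3, h4]
    · exact div_mul_cancel₀ _ (ne_of_gt h3)
  -- φ * S integrable
  have hφS_int : Integrable (fun ω => φ ω * S ω) Q := by
    refine Integrable.mono' (hSint.const_mul C)
      (((hφm.mono hℬ).aestronglyMeasurable).mul hSsm) ?_
    filter_upwards [hφ_bdd] with ω h1
    rw [Real.norm_eq_abs, abs_mul, abs_of_nonneg (hSnn ω)]
    exact mul_le_mul_of_nonneg_right h1 (hSnn ω)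
  -- pull out property
  have hpull : Q[fun ω => φ ω * S ω | ℬ] =ᵐ[Q] fun ω => φ ω * g ω := by
    have := condExp_mul_of_stronglyMeasurable_left (μ := Q) hφm hφS_int hSint
    exact this
  -- the set integral identity
  have key : ∀ s : Set Ω, MeasurableSet[ℬ] s → P s < ⊤ →
      ∫ ω in s, φ ω ∂P = ∫ ω in s, F ω ∂P := by
    intro s hs _
    have hs0 : MeasurableSet[m0] s := hℬ _ hs
    have e1 : ∫ ω in s, φ ω ∂P = ∫ ω in s, φ ω * S ω ∂Q := by
      rw [← setIntegral_rnDeriv_smul hPQ hs0]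
      refine setIntegral_congr_ae (μ := Q) hs0 (Filter.Eventually.of_forall fun ω _ => ?_)
      rw [smul_eq_mul, mul_comm, hS]
    have e2 : ∫ ω in s, φ ω * S ω ∂Q = ∫ ω in s, h ω ∂Q := by
      rw [← setIntegral_condExp hℬ hφS_int hs]
      refine setIntegral_congr_ae (μ := Q) hs0 ?_
      filter_upwards [hpull, hφg] with ω h1 h2 _
      rw [h1, h2]
    have e3 : ∫ ω in s, h ω ∂Q = ∫ ω in s, F ω * S ω ∂Q :=
      setIntegral_condExp hℬ hFS_int hs
    have e4 : ∫ ω in s, F ω * S ω ∂Q = ∫ ω in s, F ω ∂P := by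
      rw [← setIntegral_rnDeriv_smul hPQ hs0]
      refine setIntegral_congr_ae (μ := Q) hs0 (Filter.Eventually.of_forall fun ω _ => ?_)
      rw [smul_eq_mul, mul_comm, hS]
    rw [e1, e2, e3, e4]
  have hmain : φ =ᵐ[P] P[F | ℬ] :=
    ae_eq_condExp_of_forall_setIntegral_eq hℬ hFint
      (fun s _ _ => hφ_int.integrableOn) key hφm.aestronglyMeasurable
  filter_upwards [hmain] with ω hw
  exact hw.symm

/-- Bayes' formula for conditional expectations under a change of measure: if `P ≪ Q` with
Radon–Nikodym derivative `S = dP/dQ`, `ℬ ⊆ ℱ` is a sub-σ-algebra and `F` is bounded and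
measurable, then `E_Q[S | ℬ] > 0` `P`-a.s. and
`E_P[F | ℬ] = E_Q[F·S | ℬ] / E_Q[S | ℬ]` `P`-a.s. -/
theorem bayes_formula_condexp
    {Ω : Type*} (ℬ : MeasurableSpace Ω) {m0 : MeasurableSpace Ω}
    (Q P : Measure Ω) [IsProbabilityMeasure Q] [IsProbabilityMeasure P]
    (hPQ : P ≪ Q)
    (S : Ω → ℝ) (hS : S = fun ω => (P.rnDeriv Q ω).toReal)
    (hℬ : ℬ ≤ m0)
    (F : Ω → ℝ) (hF : Measurable F) (hFbdd : ∃ C, ∀ ω, |F ω| ≤ C) :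
    (∀ᵐ ω ∂P, 0 < (Q[S | ℬ]) ω) ∧
      (∀ᵐ ω ∂P, (P[F | ℬ]) ω = (Q[fun ω => F ω * S ω | ℬ]) ω / (Q[S | ℬ]) ω) :=
  bayes_aux hℬ Q P hPQ S hS F hF hFbdd
end

section
/- Let (Ω, ℱ, P) be a probability space with a filtration (ℱ_t)_{t ∈ [0,T]}, and let h : [0,T] × Ω → ℝ be jointly measurable and bounded, such that for every s ∈ (0,T] the random variable h_s is measurable with respect to ℱ_{s-} := σ(⋃_{u < s} ℱ_u). If the process M_t := ∫_0^t h_s ds is a martingale with respect to (ℱ_t) under P, then h = 0 almost everywhere with respect to the product of Lebesgue measure on [0,T] and P. (In particular, a martingale whose paths are absolutely continuous integrals of such an integrand is constant.) -/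
open MeasureTheory Filter Set Topology
open scoped NNReal

/-!
If `|h| ≤ K`, the paths of `M` are `K`-Lipschitz. By orthogonality of martingale increments,
`g t = E[M_t²]` satisfies `g y - g x = E[(M_y - M_x)²] ≤ K² (y - x)²`, and a function with
quadratically small increments is constant; hence `M_t = M_0 = 0` a.s. for every `t`. Continuity of
the paths makes this hold a.s. simultaneously for all `t`, the Lebesgue differentiation theorem
then gives `h(·, ω) = 0` a.e. on `[0, T]` for a.e. `ω`, and Fubini concludes.
-/

theorem le_of_sub_le_mul_sq {f : ℝ → ℝ} {a b C : ℝ} (hab : a ≤ b)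
    (hf : ∀ x ∈ Icc a b, ∀ y ∈ Icc a b, x ≤ y → f y - f x ≤ C * (y - x) ^ 2) : f b ≤ f a := by
  have hn : ∀ n : ℕ, 0 < n → f b - f a ≤ C * (b - a) ^ 2 / n := by
    intro n hn
    have hn' : (0 : ℝ) < n := by exact_mod_cast hn
    set δ := (b - a) / n
    have hδ : 0 ≤ δ := div_nonneg (sub_nonneg.2 hab) hn'.le
    have hb : a + n * δ = b := by simp only [δ]; field_simp; ring
    have hmem : ∀ k ≤ n, a + k * δ ∈ Icc a b := fun k hk => by
      refine ⟨le_add_of_nonneg_right (by positivity), hb ▸ ?_⟩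
      gcongr
    calc f b - f a = f (a + n * δ) - f (a + (0 : ℕ) * δ) := by
          rw [hb, Nat.cast_zero, zero_mul, add_zero]
      _ = ∑ k ∈ Finset.range n, (f (a + (k + 1 : ℕ) * δ) - f (a + k * δ)) :=
          (Finset.sum_range_sub (fun k => f (a + k * δ)) n).symm
      _ ≤ ∑ _k ∈ Finset.range n, C * δ ^ 2 := by
          refine Finset.sum_le_sum fun k hk => ?_
          have hk := Finset.mem_range.1 hk
          have hstep : a + (k + 1 : ℕ) * δ - (a + k * δ) = δ := by push_cast; ring
          simpa only [hstep] using hf _ (hmem k hk.le) _ (hmem (k + 1) hk) (by linarith)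
      _ = C * (b - a) ^ 2 / n := by
          simp only [δ, Finset.sum_const, Finset.card_range, nsmul_eq_mul]
          field_simp
  have hlim := tendsto_const_div_atTop_nhds_zero_nat (C * (b - a) ^ 2)
  have := ge_of_tendsto hlim ((eventually_gt_atTop 0).mono hn)
  linarith

theorem ae_restrict_Icc_eq_zero_of_intervalIntegral_eq_zero {E : Type*} [NormedAddCommGroup E]
    [NormedSpace ℝ E] [CompleteSpace E] {f : ℝ → E} {a b : ℝ}
    (hf : IntervalIntegrable f volume a b) (h0 : ∀ x ∈ Icc a b, ∫ t in a..x, f t = 0) :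
    f =ᵐ[volume.restrict (Icc a b)] 0 := by
  have hne : ∀ᵐ x ∂volume, x ≠ a ∧ x ≠ b :=
    (measure_eq_zero_iff_ae_notMem.1 (measure_singleton a)).and
      (measure_eq_zero_iff_ae_notMem.1 (measure_singleton b))
  rw [EventuallyEq, ae_restrict_iff' measurableSet_Icc]
  filter_upwards [hf.ae_hasDerivAt_integral, hne] with x hderiv ⟨hxa, hxb⟩ hx
  have hx' : x ∈ Ioo a b := ⟨hx.1.lt_of_ne hxa.symm, hx.2.lt_of_ne hxb⟩
  have hab : a ≤ b := hx.1.trans hx.2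
  have hzero : (fun y => ∫ t in a..y, f t) =ᶠ[𝓝 x] fun _ => 0 :=
    eventually_of_mem (Ioo_mem_nhds hx'.1 hx'.2) fun y hy => h0 y (Ioo_subset_Icc_self hy)
  rw [uIcc_of_le hab] at hderiv
  exact (hderiv hx a (left_mem_Icc.2 hab)).unique
    ((hasDerivAt_const x 0).congr_of_eventuallyEq hzero)

theorem lipschitzWith_primitive {E : Type*} [NormedAddCommGroup E] [NormedSpace ℝ E] {f : ℝ → E}
    {K : ℝ≥0} (hf : ∀ a b, IntervalIntegrable f volume a b) (hK : ∀ x, ‖f x‖ ≤ K) (a : ℝ) :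
    LipschitzWith K fun x => ∫ t in a..x, f t :=
  LipschitzWith.of_dist_le_mul fun x y => by
    rw [dist_eq_norm, intervalIntegral.integral_interval_sub_left (hf a x) (hf a y), Real.dist_eq]
    exact intervalIntegral.norm_integral_le_of_norm_le_const fun t _ => hK t

theorem ae_forall_Icc_eq_of_continuousOn {Ω E : Type*} {m0 : MeasurableSpace Ω} {μ : Measure Ω}
    [TopologicalSpace E] [T2Space E] {X Y : ℝ → Ω → E} {a b : ℝ}
    (hX : ∀ ω, ContinuousOn (fun t => X t ω) (Icc a b))
    (hY : ∀ ω, ContinuousOn (fun t => Y t ω) (Icc a b))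
    (hXY : ∀ t ∈ Icc a b, X t =ᵐ[μ] Y t) : ∀ᵐ ω ∂μ, ∀ t ∈ Icc a b, X t ω = Y t ω := by
  rcases lt_or_ge b a with hba | hab
  · simp [Icc_eq_empty_of_lt hba]
  have hrat : ∀ᵐ ω ∂μ, ∀ q : ℚ, X (projIcc a b hab q) ω = Y (projIcc a b hab q) ω :=
    ae_all_iff.2 fun q => hXY _ (projIcc a b hab q).2
  filter_upwards [hrat] with ω hω t ht
  have hcont : ∀ Z : ℝ → Ω → E, ContinuousOn (fun t => Z t ω) (Icc a b) →
      Continuous fun x => Z (projIcc a b hab x) ω := fun Z hZ =>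
    hZ.comp_continuous (continuous_subtype_val.comp continuous_projIcc) fun x =>
      (projIcc a b hab x).2
  have := Rat.denseRange_cast.equalizer (hcont X (hX ω)) (hcont Y (hY ω)) (funext hω)
  simpa [projIcc_of_mem hab ht] using congrFun this t

namespace MeasureTheory.Martingale

variable {ι Ω : Type*} [Preorder ι] {m0 : MeasurableSpace Ω} {μ : Measure Ω} [IsFiniteMeasure μ]

theorem integral_mul_eq_integral_sq {ℱ : Filtration ι m0} {M : ι → Ω → ℝ}
    (hM : Martingale M ℱ μ) {i j : ι} (hij : i ≤ j) (hi : MemLp (M i) 2 μ)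
    (hj : MemLp (M j) 2 μ) :
    ∫ ω, M i ω * M j ω ∂μ = ∫ ω, M i ω ^ 2 ∂μ := by
  have hpull : μ[M i * M j | ℱ i] =ᵐ[μ] M i * μ[M j | ℱ i] :=
    condExp_mul_of_stronglyMeasurable_left (hM.1 i) (hi.integrable_mul hj)
      (hj.integrable one_le_two)
  calc ∫ ω, M i ω * M j ω ∂μ = ∫ ω, (μ[M i * M j | ℱ i]) ω ∂μ :=
        (integral_condExp (ℱ.le i)).symm
    _ = ∫ ω, M i ω ^ 2 ∂μ := integral_congr_ae <| by
        filter_upwards [hpull, hM.condExp_ae_eq hij] with ω hpull_ω hcond_ω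
        rw [hpull_ω, Pi.mul_apply, hcond_ω, sq]

theorem integral_sub_sq {ℱ : Filtration ι m0} {M : ι → Ω → ℝ}
    (hM : Martingale M ℱ μ) {i j : ι} (hij : i ≤ j) (hi : MemLp (M i) 2 μ)
    (hj : MemLp (M j) 2 μ) :
    ∫ ω, (M j ω - M i ω) ^ 2 ∂μ = ∫ ω, M j ω ^ 2 ∂μ - ∫ ω, M i ω ^ 2 ∂μ := by
  have hexpand : ∀ ω, (M j ω - M i ω) ^ 2 = M j ω ^ 2 - 2 * (M i ω * M j ω) + M i ω ^ 2 :=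
    fun ω => by ring
  have hij_int : Integrable (fun ω => M i ω * M j ω) μ := hi.integrable_mul hj
  have hdiff_int : Integrable (fun ω => M j ω ^ 2 - 2 * (M i ω * M j ω)) μ :=
    hj.integrable_sq.sub (hij_int.const_mul 2)
  simp_rw [hexpand]
  rw [integral_add hdiff_int hi.integrable_sq, integral_sub hj.integrable_sq (hij_int.const_mul 2),
    integral_const_mul, hM.integral_mul_eq_integral_sq hij hi hj]
  ring

theorem ae_eq_of_lipschitzWith {a b : ℝ} {ℱ : Filtration (Icc a b) m0}
    {M : Icc a b → Ω → ℝ} (hM : Martingale M ℱ μ) (hL2 : ∀ t, MemLp (M t) 2 μ) {K : ℝ≥0}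
    (hlip : ∀ ω, LipschitzWith K fun t => M t ω) (s t : Icc a b) : M s =ᵐ[μ] M t := by
  wlog hst : s ≤ t generalizing s t
  · exact (this t s (le_of_not_ge hst)).symm
  have hab : a ≤ b := s.2.1.trans s.2.2
  set g : ℝ → ℝ := fun x => ∫ ω, M (projIcc a b hab x) ω ^ 2 ∂μ
  have hg : ∀ x ∈ Icc (s : ℝ) t, ∀ y ∈ Icc (s : ℝ) t, x ≤ y →
      g y - g x ≤ μ.real univ * K ^ 2 * (y - x) ^ 2 := by
    intro x hx y hy hxy
    have hxab : x ∈ Icc a b := ⟨s.2.1.trans hx.1, hx.2.trans t.2.2⟩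
    have hyab : y ∈ Icc a b := ⟨s.2.1.trans hy.1, hy.2.trans t.2.2⟩
    simp only [g, projIcc_of_mem hab hxab, projIcc_of_mem hab hyab]
    rw [← hM.integral_sub_sq (Subtype.mk_le_mk.2 hxy) (hL2 _) (hL2 _)]
    have hbound : ∀ ω, ‖(M ⟨y, hyab⟩ ω - M ⟨x, hxab⟩ ω) ^ 2‖ ≤ K ^ 2 * (y - x) ^ 2 := by
      intro ω
      have := (hlip ω).dist_le_mul ⟨y, hyab⟩ ⟨x, hxab⟩
      rw [Real.dist_eq, Subtype.dist_eq, Real.dist_eq, abs_of_nonneg (sub_nonneg.2 hxy)] at this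
      rw [Real.norm_eq_abs, abs_pow, ← mul_pow]
      exact pow_le_pow_left₀ (abs_nonneg _) this 2
    calc _ ≤ ‖∫ ω, (M ⟨y, hyab⟩ ω - M ⟨x, hxab⟩ ω) ^ 2 ∂μ‖ := Real.le_norm_self _
      _ ≤ K ^ 2 * (y - x) ^ 2 * μ.real univ :=
          norm_integral_le_of_norm_le_const (ae_of_all _ hbound)
      _ = _ := by ring
  have hg_le : g t - g s ≤ 0 := sub_nonpos.2 (le_of_sub_le_mul_sq hst hg)
  have hsq_int : Integrable (fun ω => (M t ω - M s ω) ^ 2) μ :=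
    ((hL2 t).sub (hL2 s)).integrable_sq
  have hzero : ∫ ω, (M t ω - M s ω) ^ 2 ∂μ = 0 := by
    refine le_antisymm ?_ (integral_nonneg fun ω => sq_nonneg _)
    simpa only [g, projIcc_val, hM.integral_sub_sq hst (hL2 s) (hL2 t)] using hg_le
  filter_upwards [(integral_eq_zero_iff_of_nonneg (fun ω => sq_nonneg _) hsq_int).1 hzero]
    with ω hω
  exact (sub_eq_zero.1 (pow_eq_zero_iff two_ne_zero |>.1 hω)).symm

end MeasureTheory.Martingale

theorem integrand_zero_of_absolutely_continuous_martingale_general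
    {Ω : Type*} {m0 : MeasurableSpace Ω} {T : ℝ}
    (ℱ : Filtration (Set.Icc (0 : ℝ) T) m0)
    (P : Measure Ω) [IsProbabilityMeasure P]
    (h : ℝ → Ω → ℝ)
    (hmeas : Measurable (Function.uncurry h))
    (hbdd : ∃ C, ∀ s ω, |h s ω| ≤ C)
    (M : Set.Icc (0 : ℝ) T → Ω → ℝ)
    (hM : ∀ t : Set.Icc (0 : ℝ) T, M t = fun ω => ∫ s in (0 : ℝ)..(t : ℝ), h s ω)
    (hmart : Martingale M ℱ P) :
    (fun p : ℝ × Ω => h p.1 p.2) =ᵐ[(volume.restrict (Set.Icc (0 : ℝ) T)).prod P] 0 := by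
  obtain ⟨C, hC⟩ := hbdd
  have hbound : ∀ s ω, ‖h s ω‖ ≤ C.toNNReal := fun s ω =>
    (Real.norm_eq_abs _ ▸ hC s ω).trans (Real.le_coe_toNNReal C)
  have hint : ∀ ω a b, IntervalIntegrable (fun s => h s ω) volume a b := fun ω a b =>
    intervalIntegrable_const.mono_fun' hmeas.of_uncurry_right.aestronglyMeasurable
      (ae_of_all _ fun s => hbound s ω)
  have hL2 : ∀ t, MemLp (M t) 2 P := fun t =>
    MemLp.of_bound ((hmart.1 t).mono (ℱ.le t)).aestronglyMeasurable _ <| ae_of_all _ fun ω => by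
      rw [hM]
      exact intervalIntegral.norm_integral_le_of_norm_le_const fun s _ => hbound s ω
  have hlip : ∀ ω, LipschitzWith C.toNNReal fun t => M t ω := fun ω => by
    simp only [hM]
    exact (lipschitzWith_primitive (hint ω) (hbound · ω) 0).restrict (Icc 0 T)
  have hprimitive_zero :
      ∀ t ∈ Icc 0 T, (fun ω => ∫ s in (0 : ℝ)..t, h s ω) =ᵐ[P] fun _ => 0 := fun t ht => by
    have := hmart.ae_eq_of_lipschitzWith hL2 hlip ⟨t, ht⟩ ⟨0, left_mem_Icc.2 (ht.1.trans ht.2)⟩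
    simpa only [hM, intervalIntegral.integral_same] using this
  have hpath : ∀ᵐ ω ∂P, ∀ t ∈ Icc 0 T, ∫ s in (0 : ℝ)..t, h s ω = 0 :=
    ae_forall_Icc_eq_of_continuousOn
      (fun ω => (intervalIntegral.continuous_primitive (hint ω) 0).continuousOn)
      (fun _ => continuousOn_const) hprimitive_zero
  have hset : MeasurableSet {p : ℝ × Ω | h p.1 p.2 = 0} :=
    measurableSet_eq_fun hmeas measurable_const
  refine (Measure.ae_prod_iff_ae_ae hset).2 ((Measure.ae_ae_comm ?_).1 ?_)
  · exact measurableSet_eq_fun (hmeas.comp measurable_swap) measurable_const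
  · filter_upwards [hpath] with ω hω
    exact ae_restrict_Icc_eq_zero_of_intervalIntegral_eq_zero (hint ω 0 T) hω

/-- A continuous finite-variation martingale with a bounded, jointly measurable integrand `h`
such that `h_s` is `ℱ_{s-}`-measurable must have `h = 0` a.e. with respect to
Lebesgue measure on `[0,T]` times `P`. -/
theorem integrand_zero_of_absolutely_continuous_martingale
    {Ω : Type*} {m0 : MeasurableSpace Ω} {T : ℝ}
    (ℱ : Filtration (Set.Icc (0 : ℝ) T) m0)
    (P : Measure Ω) [IsProbabilityMeasure P]
    (h : ℝ → Ω → ℝ)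
    (hmeas : Measurable (Function.uncurry h))
    (hbdd : ∃ C, ∀ s ω, |h s ω| ≤ C)
    (hpred : ∀ s : Set.Icc (0 : ℝ) T, 0 < (s : ℝ) →
      @Measurable Ω ℝ (⨆ (u : Set.Icc (0 : ℝ) T) (_ : u < s), ℱ u) _ (h (s : ℝ)))
    (M : Set.Icc (0 : ℝ) T → Ω → ℝ)
    (hM : ∀ t : Set.Icc (0 : ℝ) T, M t = fun ω => ∫ s in (0 : ℝ)..(t : ℝ), h s ω)
    (hmart : Martingale M ℱ P) :
    (fun p : ℝ × Ω => h p.1 p.2) =ᵐ[(volume.restrict (Set.Icc (0 : ℝ) T)).prod P] 0 :=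
  integrand_zero_of_absolutely_continuous_martingale_general ℱ P h hmeas hbdd M hM hmart
end

section
/- Let m ∈ ℕ, let Y, A : Fin m → ℝ take values in {0,1}, and let r : Fin m → ℝ be nonnegative. Let X be the m × 2 real matrix with columns X_{i,0} = Y_i and X_{i,1} = Y_i·A_i, let R be the m × m diagonal matrix with diagonal entries Y_i·r_i, let V be the 2 × 2 matrix with rows (1, 0) and (−1, 1), and let S be the 2 × 2 diagonal matrix with diagonal entries ∑_i r_i·Y_i·(1 − A_i) and ∑_i r_i·Y_i·A_i. If ∑_i r_i·Y_i·(1 − A_i) > 0 and ∑_i r_i·Y_i·A_i > 0, then the 2 × 2 matrix Xᵀ R X is invertible and (Xᵀ R X)^{−1} = V S^{−1} Vᵀ. -/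
/-! Since `Y` and `A` are `0/1`-valued, `XᵀRX = !![a + b, b; b, b]`, where `a` and `b` are the
weighted sizes of the two treatment groups. This factors as `W S Wᵀ` with `W = !![1, 1; 0, 1]`,
and `V = (Wᵀ)⁻¹`, so `(W S Wᵀ)⁻¹ = V S⁻¹ Vᵀ`. -/

open Matrix

namespace Matrix

variable {n K : Type*} [Fintype n] [DecidableEq n] [CommRing K]

theorem mul_mul_transpose_mul_mul_inv_mul_transpose_eq_one {W V S : Matrix n n K}
    (hWV : Wᵀ * V = 1) (hS : IsUnit S.det) : W * S * Wᵀ * (V * S⁻¹ * Vᵀ) = 1 := by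
  have hVW : V * Wᵀ = 1 := mul_eq_one_comm.mp hWV
  calc W * S * Wᵀ * (V * S⁻¹ * Vᵀ) = W * (S * (Wᵀ * V) * S⁻¹) * Vᵀ := by
        simp only [Matrix.mul_assoc]
    _ = (V * Wᵀ)ᵀ := by rw [hWV, Matrix.mul_one, mul_nonsing_inv S hS, Matrix.mul_one,
        transpose_mul, transpose_transpose]
    _ = 1 := by rw [hVW, transpose_one]

theorem transpose_mul_diagonal_mul_apply {m n R : Type*} [Fintype m] [DecidableEq m]
    [CommSemiring R] (X : Matrix m n R) (w : m → R) (i j : n) :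
    (Xᵀ * diagonal w * X) i j = ∑ k, w k * X k i * X k j := by
  rw [mul_apply]
  simp only [mul_diagonal, transpose_apply]
  exact Finset.sum_congr rfl fun k _ => by ring

theorem of_fin_two_add_eq_mul_diagonal_mul_transpose {K : Type*} [CommRing K] (a b : K) :
    !![a + b, b; b, b] = !![1, 1; 0, 1] * diagonal ![a, b] * !![1, 1; 0, 1]ᵀ := by
  ext i j; fin_cases i <;> fin_cases j <;> simp [mul_apply, Fin.sum_univ_two, vecMul_diagonal]

theorem isUnit_det_diagonal_fin_two {K : Type*} [Field K] {a b : K} (ha : a ≠ 0) (hb : b ≠ 0) :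
    IsUnit (diagonal ![a, b]).det := by
  simpa [det_diagonal] using And.intro ha hb

end Matrix

theorem weighted_gram_eq {m : ℕ} {R : Type*} [CommRing R] (Y A r : Fin m → R)
    (hY : ∀ i, Y i = 0 ∨ Y i = 1) (hA : ∀ i, A i = 0 ∨ A i = 1)
    (X : Matrix (Fin m) (Fin 2) R) (hX : ∀ i, X i 0 = Y i ∧ X i 1 = Y i * A i) :
    Xᵀ * diagonal (fun i => Y i * r i) * X =
      !![∑ i, r i * Y i * (1 - A i) + ∑ i, r i * Y i * A i, ∑ i, r i * Y i * A i;
        ∑ i, r i * Y i * A i, ∑ i, r i * Y i * A i] := by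
  ext i j
  rw [transpose_mul_diagonal_mul_apply, ← Finset.sum_add_distrib]
  fin_cases i <;> fin_cases j <;> simp only [Fin.zero_eta, Fin.mk_one, of_apply, cons_val',
      cons_val_zero, cons_val_one, empty_val', cons_val_fin_one, (hX _).1, (hX _).2] <;>
    refine Finset.sum_congr rfl fun k _ => ?_ <;>
    rcases hY k with h | h <;> rcases hA k with h' | h' <;> simp [h, h']

theorem weighted_design_matrix_inverse_general
    (m : ℕ) (Y A : Fin m → ℝ)
    (hY : ∀ i, Y i = 0 ∨ Y i = 1) (hA : ∀ i, A i = 0 ∨ A i = 1)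
    (r : Fin m → ℝ)
    (X : Matrix (Fin m) (Fin 2) ℝ)
    (hX : ∀ i, X i 0 = Y i ∧ X i 1 = Y i * A i)
    (R : Matrix (Fin m) (Fin m) ℝ)
    (hR : R = Matrix.diagonal fun i => Y i * r i)
    (V : Matrix (Fin 2) (Fin 2) ℝ)
    (hV : V = !![1, 0; -1, 1])
    (S : Matrix (Fin 2) (Fin 2) ℝ)
    (hS : S = Matrix.diagonal ![∑ i, r i * Y i * (1 - A i), ∑ i, r i * Y i * A i])
    (ha : 0 < ∑ i, r i * Y i * (1 - A i)) (hb : 0 < ∑ i, r i * Y i * A i) :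
    IsUnit (Xᵀ * R * X) ∧ (Xᵀ * R * X)⁻¹ = V * S⁻¹ * Vᵀ := by
  have hM : Xᵀ * R * X = !![1, 1; 0, 1] * S * !![1, 1; 0, 1]ᵀ := by
    rw [hR, weighted_gram_eq Y A r hY hA X hX, hS, of_fin_two_add_eq_mul_diagonal_mul_transpose]
  have hWV : (!![1, 1; 0, 1] : Matrix (Fin 2) (Fin 2) ℝ)ᵀ * V = 1 := by
    rw [hV]; ext i j; fin_cases i <;> fin_cases j <;> simp [mul_apply, Fin.sum_univ_two]
  have hS_det : IsUnit S.det := hS ▸ isUnit_det_diagonal_fin_two ha.ne' hb.ne'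
  have hmul : Xᵀ * R * X * (V * S⁻¹ * Vᵀ) = 1 := by
    rw [hM]; exact mul_mul_transpose_mul_mul_inv_mul_transpose_eq_one hWV hS_det
  exact ⟨(isUnit_iff_isUnit_det _).2 (isUnit_det_of_right_inverse hmul), inv_eq_right_inv hmul⟩

/-- If both weighted risk-group sums are positive, the weighted design matrix `XᵀRX` is
invertible and its inverse is `V S⁻¹ Vᵀ`, where `S` is the diagonal matrix of the two sums
and `V = !![1, 0; -1, 1]`. -/
theorem weighted_design_matrix_inverse
    (m : ℕ) (Y A : Fin m → ℝ)
    (hY : ∀ i, Y i = 0 ∨ Y i = 1) (hA : ∀ i, A i = 0 ∨ A i = 1)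
    (r : Fin m → ℝ) (hr : ∀ i, 0 ≤ r i)
    (X : Matrix (Fin m) (Fin 2) ℝ)
    (hX : ∀ i, X i 0 = Y i ∧ X i 1 = Y i * A i)
    (R : Matrix (Fin m) (Fin m) ℝ)
    (hR : R = Matrix.diagonal fun i => Y i * r i)
    (V : Matrix (Fin 2) (Fin 2) ℝ)
    (hV : V = !![1, 0; -1, 1])
    (S : Matrix (Fin 2) (Fin 2) ℝ)
    (hS : S = Matrix.diagonal ![∑ i, r i * Y i * (1 - A i), ∑ i, r i * Y i * A i])
    (ha : 0 < ∑ i, r i * Y i * (1 - A i)) (hb : 0 < ∑ i, r i * Y i * A i) :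
    IsUnit (Xᵀ * R * X) ∧ (Xᵀ * R * X)⁻¹ = V * S⁻¹ * Vᵀ :=
  weighted_design_matrix_inverse_general m Y A hY hA r X hX R hR V hV S hS ha hb
end
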